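/- Let φ_i : G_i → G be a sequence of good approximations with regular neighborhoods A_i ⊆ G_i and A ⊆ G, with G first countable. Assume A has the property that whenever h ∈ (closure A)³ \ A, then h² ∉ closure A. Then for all sufficiently large i the following holds: for every convergent sequence g_j → g in G_i, one has ‖g‖_{A_i} ≤ 2 · liminf_{j → ∞} ‖g_j‖_{A_i}, where ‖·‖_{A_i} is the escape norm with respect to A_i. -/

import Mathlib

open Filter Topology Pointwise

/-- A sequence of maps `φ i : Gi i → G` is a sequence of *good approximations*
with regular neighborhoods `Ai i ⊆ Gi i` and `A ⊆ G`. -/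
structure IsGoodApprox {G : Type*} [Group G] [TopologicalSpace G] [IsTopologicalGroup G]
    {Gi : ℕ → Type*} [∀ i, Group (Gi i)] [∀ i, TopologicalSpace (Gi i)]
    [∀ i, IsTopologicalGroup (Gi i)]
    (φ : ∀ i, Gi i → G) (Ai : ∀ i, Set (Gi i)) (A : Set G) : Prop where
  one_mem_A : (1 : G) ∈ A
  symm_A : A⁻¹ = A
  open_A : IsOpen A
  compact_closure_A : IsCompact (closure A)
  one_mem_Ai : ∀ i, (1 : Gi i) ∈ Ai i
  symm_Ai : ∀ i, (Ai i)⁻¹ = Ai i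
  open_Ai : ∀ i, IsOpen (Ai i)
  compact_closure_Ai : ∀ i, IsCompact (closure (Ai i))
  prop_I : ∀ U : Set G, U ⊆ A → IsOpen U → U.Nonempty →
    ∀ᶠ i in atTop, (φ i '' Ai i ∩ U).Nonempty
  prop_II : ∀ V : Set G, IsOpen V → closure A ⊆ V →
    ∀ᶠ i in atTop, φ i '' Ai i ⊆ V
  prop_III : ∀ n : ℕ, ∀ g h : ∀ i, Gi i,
    (∀ i, g i ∈ Ai i ^ n) → (∀ i, h i ∈ Ai i ^ n) →
    Tendsto (fun i => (φ i (g i * h i))⁻¹ * φ i (g i) * φ i (h i)) atTop (𝓝 1)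
  prop_IV : ∀ n : ℕ, ∀ K : Set G, K ⊆ A → IsCompact K →
    ∃ i₀ : ℕ, ∀ i ≥ i₀, ∀ g ∈ Ai i ^ n, φ i g ∈ K → g ∈ Ai i
  prop_V : ∀ K U : Set G, K ⊆ U → U ⊆ A → IsCompact K → IsOpen U →
    ∃ Ui : ∀ i, Set (Gi i), (∀ i, IsOpen (Ui i) ∧ Ui i ⊆ Ai i) ∧
      ∀ᶠ i in atTop, φ i ⁻¹' K ∩ Ai i ⊆ Ui i ∧ Ui i ⊆ φ i ⁻¹' U

/-- A sequence of subgroups `Hi i ≤ Gi i` is *small* with respect to the pairs `(φ i, Ai i)`. -/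
def IsSmallSeq {G : Type*} [Group G] [TopologicalSpace G] [IsTopologicalGroup G]
    {Gi : ℕ → Type*} [∀ i, Group (Gi i)] [∀ i, TopologicalSpace (Gi i)]
    [∀ i, IsTopologicalGroup (Gi i)]
    (φ : ∀ i, Gi i → G) (Ai : ∀ i, Set (Gi i)) (Hi : ∀ i, Subgroup (Gi i)) : Prop :=
  (∀ᶠ i in atTop, (Hi i : Set (Gi i)) ⊆ Ai i) ∧
    ∀ h : ∀ i, Gi i, (∀ i, h i ∈ Hi i) →
      Tendsto (fun i => φ i (h i)) atTop (𝓝 (1 : G))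

/-- The escape norm of `g` with respect to a symmetric set `B`:
`‖g‖_B = inf { 1/(m+1) : g^j ∈ B for all j = 0, 1, …, m }`. -/
noncomputable def escapeNorm {H : Type*} [Group H] (B : Set H) (g : H) : ℝ :=
  sInf {x : ℝ | ∃ m : ℕ, x = 1 / ((m : ℝ) + 1) ∧ ∀ j : ℕ, j ≤ m → g ^ j ∈ B}

section esc
variable {H : Type*} [Group H] {B : Set H} {g : H}

lemma escapeNorm_set_nonempty (h1 : (1:H) ∈ B) :
    {x : ℝ | ∃ m : ℕ, x = 1 / ((m : ℝ) + 1) ∧ ∀ j : ℕ, j ≤ m → g ^ j ∈ B}.Nonempty := by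
  refine ⟨1, 0, by norm_num, ?_⟩
  intro j hj; interval_cases j; simpa using h1

lemma escapeNorm_set_bdd :
    BddBelow {x : ℝ | ∃ m : ℕ, x = 1 / ((m : ℝ) + 1) ∧ ∀ j : ℕ, j ≤ m → g ^ j ∈ B} := by
  refine ⟨0, fun x hx => ?_⟩
  rcases hx with ⟨m, rfl, _⟩
  positivity

lemma escapeNorm_nonneg (h1 : (1:H) ∈ B) : 0 ≤ escapeNorm B g :=
  le_csInf (escapeNorm_set_nonempty h1) (fun x hx => by rcases hx with ⟨m, rfl, _⟩; positivity)

lemma escapeNorm_le_one (h1 : (1:H) ∈ B) : escapeNorm B g ≤ 1 := by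
  refine csInf_le escapeNorm_set_bdd ⟨0, by norm_num, ?_⟩
  intro j hj; interval_cases j; simpa using h1

lemma escapeNorm_le {m : ℕ} (h : ∀ j : ℕ, j ≤ m → g ^ j ∈ B) :
    escapeNorm B g ≤ 1 / ((m : ℝ) + 1) :=
  csInf_le escapeNorm_set_bdd ⟨m, rfl, h⟩

lemma exists_of_escapeNorm_lt (h1 : (1:H) ∈ B) {c : ℝ} (h : escapeNorm B g < c) :
    ∃ m : ℕ, 1 / ((m : ℝ) + 1) < c ∧ ∀ j : ℕ, j ≤ m → g ^ j ∈ B := by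
  rcases exists_lt_of_csInf_lt (escapeNorm_set_nonempty h1) h with ⟨x, ⟨m, rfl, hm⟩, hx⟩
  exact ⟨m, hx, hm⟩

end esc

lemma escape_of_key {H : Type*} [Group H] [TopologicalSpace H] [IsTopologicalGroup H]
    {B : Set H} (h1 : (1:H) ∈ B)
    (hkey : ∀ h : H, h ∈ closure B → h ^ 2 ∈ closure B → h ∈ B)
    (gseq : ℕ → H) (g : H) (hconv : Tendsto gseq atTop (𝓝 g)) :
    escapeNorm B g ≤ 2 * liminf (fun j => escapeNorm B (gseq j)) atTop := by
  set L := liminf (fun j => escapeNorm B (gseq j)) atTop with hLdef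
  have hcob : IsCoboundedUnder (· ≥ ·) atTop (fun j => escapeNorm B (gseq j)) := by
    refine Filter.IsBoundedUnder.isCoboundedUnder_ge ?_
    exact Filter.isBoundedUnder_of ⟨1, fun j => escapeNorm_le_one h1⟩
  have hL0 : 0 ≤ L :=
    Filter.le_liminf_of_le hcob (Eventually.of_forall fun j => escapeNorm_nonneg h1)
  refine le_of_forall_pos_le_add fun ε hε => ?_
  set c := L + ε / 2 with hcdef
  have hc0 : 0 < c := by positivity
  have hLc : L < c := by simp [hcdef]; linarith
  have hfreq : ∃ᶠ j in atTop, escapeNorm B (gseq j) < c :=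
    Filter.frequently_lt_of_liminf_lt hcob hLc
  have hex : ∃ m : ℕ, 1 / ((m : ℝ) + 1) < c := by
    obtain ⟨n, hn⟩ := exists_nat_gt (1 / c)
    refine ⟨n, ?_⟩
    rw [div_lt_iff₀ (by positivity)]
    rw [div_lt_iff₀ hc0] at hn
    nlinarith
  set M := Nat.find hex with hMdef
  have hMlt : 1 / ((M : ℝ) + 1) < c := Nat.find_spec hex
  have hfreq2 : ∃ᶠ j in atTop, ∀ k : ℕ, k ≤ M → gseq j ^ k ∈ B := by
    refine hfreq.mono fun j hj => ?_
    obtain ⟨m, hm1, hm2⟩ := exists_of_escapeNorm_lt h1 hj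
    have hMm : M ≤ m := Nat.find_min' hex hm1
    exact fun k hk => hm2 k (hk.trans hMm)
  have hcl : ∀ k : ℕ, k ≤ M → g ^ k ∈ closure B := fun k hk =>
    mem_closure_of_frequently_of_tendsto (hfreq2.mono fun j hj => hj k hk) (hconv.pow k)
  have hmem : ∀ k : ℕ, k ≤ M / 2 → g ^ k ∈ B := by
    intro k hk
    refine hkey _ (hcl k (by omega)) ?_
    rw [← pow_mul]
    exact hcl (k * 2) (by omega)
  have h2 : escapeNorm B g ≤ 1 / ((M / 2 : ℕ) + 1 : ℝ) := escapeNorm_le hmem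
  have h3 : (1 : ℝ) / ((M / 2 : ℕ) + 1 : ℝ) ≤ 2 / ((M : ℝ) + 1) := by
    rw [div_le_div_iff₀ (by positivity) (by positivity)]
    have : (M : ℝ) + 1 ≤ 2 * ((M / 2 : ℕ) : ℝ) + 2 := by
      exact_mod_cast (by omega : M + 1 ≤ 2 * (M / 2) + 2)
    linarith
  have h4 : 2 / ((M : ℝ) + 1) ≤ 2 * c := by
    rw [div_lt_iff₀ (by positivity : (0:ℝ) < (M:ℝ)+1)] at hMlt
    rw [div_le_iff₀ (by positivity : (0:ℝ) < (M:ℝ)+1)]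
    nlinarith
  calc escapeNorm B g ≤ 1 / ((M / 2 : ℕ) + 1 : ℝ) := h2
    _ ≤ 2 / ((M : ℝ) + 1) := h3
    _ ≤ 2 * c := h4
    _ = 2 * L + ε := by rw [hcdef]; ring

lemma closure_subset_mul {H : Type*} [Group H] [TopologicalSpace H] [IsTopologicalGroup H]
    {S Q : Set H} (hQ : IsOpen Q) (h1 : (1:H) ∈ Q) : closure S ⊆ S * Q := by
  intro x hx
  have hnb : x • Q⁻¹ ∈ 𝓝 x :=
    IsOpen.mem_nhds ((hQ.inv).smul x) ⟨1, by simpa using h1, by simp⟩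
  rcases mem_closure_iff_nhds.mp hx _ hnb with ⟨s, hsQ, hsS⟩
  rcases hsQ with ⟨q, hq, rfl⟩
  exact ⟨x * q, hsS, q⁻¹, by simpa using hq, by simp [smul_eq_mul]⟩

lemma key_lemma {G : Type*} [Group G] [TopologicalSpace G] [IsTopologicalGroup G]
    [T2Space G] [LocallyCompactSpace G] [FirstCountableTopology G]
    {Gi : ℕ → Type*} [∀ i, Group (Gi i)] [∀ i, TopologicalSpace (Gi i)]
    [∀ i, IsTopologicalGroup (Gi i)] [∀ i, T2Space (Gi i)] [∀ i, LocallyCompactSpace (Gi i)]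
    (φ : ∀ i, Gi i → G) (Ai : ∀ i, Set (Gi i)) (A : Set G)
    (hga : IsGoodApprox φ Ai A)
    (hA : ∀ h : G, h ∈ (closure A) ^ 3 → h ∉ A → h ^ 2 ∉ closure A) :
    ∀ᶠ i in atTop, ∀ x : Gi i, x ∈ closure (Ai i) → x ^ 2 ∈ closure (Ai i) → x ∈ Ai i := by
  classical
  by_contra hcon
  rw [Filter.not_eventually] at hcon
  have hcon' : ∃ᶠ i in atTop,
      ∃ x : Gi i, x ∈ closure (Ai i) ∧ x ^ 2 ∈ closure (Ai i) ∧ x ∉ Ai i := by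
    refine hcon.mono fun i hi => ?_
    push_neg at hi
    exact hi
  set bad : ℕ → Prop :=
    fun i => ∃ x : Gi i, x ∈ closure (Ai i) ∧ x ^ 2 ∈ closure (Ai i) ∧ x ∉ Ai i with hbaddef
  -- φ i 1 → 1
  have hφ1 : Tendsto (fun i => φ i 1) atTop (𝓝 (1:G)) := by
    have h0 : ∀ i, (1 : Gi i) ∈ Ai i ^ 0 := fun i => by simp [pow_zero]
    have := hga.prop_III 0 (fun _ => 1) (fun _ => 1) h0 h0
    simpa using this
  -- W
  obtain ⟨Kc, hKc, hKcs⟩ := exists_compact_superset hga.compact_closure_A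
  set W := interior Kc with hWdef
  have hWopen : IsOpen W := isOpen_interior
  have hAW : closure A ⊆ W := hKcs
  have hclW : IsCompact (closure W) :=
    hKc.of_isClosed_subset isClosed_closure (closure_minimal interior_subset hKc.isClosed)
  -- antitone basis at 1 in G
  obtain ⟨u, hu⟩ := (𝓝 (1:G)).exists_antitone_basis
  have hO : ∀ n : ℕ, ∃ Os : Set G, IsOpen Os ∧ (1:G) ∈ Os ∧ Os ⊆ u n ∧ Os ⊆ A := by
    intro n
    have h1 : u n ∩ A ∈ 𝓝 (1:G) :=
      inter_mem (hu.mem n) (hga.open_A.mem_nhds hga.one_mem_A)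
    rcases mem_nhds_iff.mp h1 with ⟨Os, hOsub, hOopen, hO1⟩
    exact ⟨Os, hOopen, hO1, fun x hx => (hOsub hx).1, fun x hx => (hOsub hx).2⟩
  choose O hOopen hO1 hOu hOA using hO
  have hK : ∀ n, ∃ K : Set G, IsCompact K ∧ (1:G) ∈ interior K ∧ K ⊆ O n :=
    fun n => exists_compact_subset (hOopen n) (hO1 n)
  choose Kn hKnc hKn1 hKnO using hK
  have hV : ∀ n, ∃ Ui : ∀ i, Set (Gi i), (∀ i, IsOpen (Ui i) ∧ Ui i ⊆ Ai i) ∧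
      ∀ᶠ i in atTop, φ i ⁻¹' (Kn n) ∩ Ai i ⊆ Ui i ∧ Ui i ⊆ φ i ⁻¹' (O n) :=
    fun n => hga.prop_V (Kn n) (O n) (hKnO n) (hOA n) (hKnc n) (hOopen n)
  choose Ui hUi1 hUi2 using hV
  have hgood : ∀ n, ∀ᶠ i in atTop, (1:Gi i) ∈ Ui n i ∧ Ui n i ⊆ φ i ⁻¹' (O n) := by
    intro n
    have hKnn : Kn n ∈ 𝓝 (1:G) :=
      mem_of_superset (isOpen_interior.mem_nhds (hKn1 n)) interior_subset
    filter_upwards [hφ1.eventually_mem hKnn, hUi2 n] with i hi hi2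
    exact ⟨hi2.1 ⟨hi, hga.one_mem_Ai i⟩, hi2.2⟩
  have ht' : ∀ n, ∃ t : ℕ, ∀ i ≥ t, (1:Gi i) ∈ Ui n i ∧ Ui n i ⊆ φ i ⁻¹' (O n) :=
    fun n => eventually_atTop.mp (hgood n)
  choose t ht using ht'
  set N : ℕ → ℕ := fun i => Nat.findGreatest (fun n => t n ≤ i) i with hNdef
  have hNspec : ∀ i, t 0 ≤ i →
      (1:Gi i) ∈ Ui (N i) i ∧ Ui (N i) i ⊆ φ i ⁻¹' (O (N i)) := by
    intro i hi
    exact ht (N i) i (Nat.findGreatest_spec (P := fun n => t n ≤ i) (Nat.zero_le i) hi)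
  have hNtend : Tendsto N atTop atTop := by
    rw [tendsto_atTop]
    intro n
    filter_upwards [eventually_ge_atTop (max (t n) n)] with i hi
    exact Nat.le_findGreatest (le_trans (le_max_right _ _) hi) (le_trans (le_max_left _ _) hi)
  -- the witness sequence
  have hsel : ∀ i, ∃ x : Gi i,
      (bad i → x ∈ closure (Ai i) ∧ x ^ 2 ∈ closure (Ai i) ∧ x ∉ Ai i) ∧
      (¬ bad i → x = 1) := by
    intro i
    by_cases hb : bad i
    · exact ⟨hb.choose, fun _ => hb.choose_spec, fun h' => absurd hb h'⟩
    · exact ⟨1, fun h' => absurd h' hb, fun _ => rfl⟩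
  choose h hbadspec honespec using hsel
  -- decompositions
  have hdec : ∀ i, ∃ av bv : Gi i, av ∈ Ai i ∧ bv ∈ Ai i ∧ h i = av * bv ∧
      (t 0 ≤ i → bad i → φ i bv ∈ O (N i)) := by
    intro i
    by_cases hb : bad i
    · by_cases hti : t 0 ≤ i
      · obtain ⟨h1U, hUO⟩ := hNspec i hti
        rcases closure_subset_mul ((hUi1 (N i) i).1) h1U ((hbadspec i hb).1) with
          ⟨av, hav, bv, hbv, hab⟩
        exact ⟨av, bv, hav, (hUi1 (N i) i).2 hbv, hab.symm, fun _ _ => hUO hbv⟩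
      · rcases closure_subset_mul (hga.open_Ai i) (hga.one_mem_Ai i) ((hbadspec i hb).1) with
          ⟨av, hav, bv, hbv, hab⟩
        exact ⟨av, bv, hav, hbv, hab.symm, fun h' => absurd h' hti⟩
    · exact ⟨1, 1, hga.one_mem_Ai i, hga.one_mem_Ai i, by simp [honespec i hb],
        fun _ hb' => absurd hb' hb⟩
  choose a b hamem hbmem habeq hbO using hdec
  have hdec2 : ∀ i, ∃ cv dv : Gi i, cv ∈ Ai i ∧ dv ∈ Ai i ∧ (h i) ^ 2 = cv * dv ∧
      (t 0 ≤ i → bad i → φ i dv ∈ O (N i)) := by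
    intro i
    by_cases hb : bad i
    · by_cases hti : t 0 ≤ i
      · obtain ⟨h1U, hUO⟩ := hNspec i hti
        rcases closure_subset_mul ((hUi1 (N i) i).1) h1U ((hbadspec i hb).2.1) with
          ⟨cv, hcv, dv, hdv, hcd⟩
        exact ⟨cv, dv, hcv, (hUi1 (N i) i).2 hdv, hcd.symm, fun _ _ => hUO hdv⟩
      · rcases closure_subset_mul (hga.open_Ai i) (hga.one_mem_Ai i) ((hbadspec i hb).2.1) with
          ⟨cv, hcv, dv, hdv, hcd⟩
        exact ⟨cv, dv, hcv, hdv, hcd.symm, fun h' => absurd h' hti⟩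
    · exact ⟨1, 1, hga.one_mem_Ai i, hga.one_mem_Ai i, by simp [honespec i hb],
        fun _ hb' => absurd hb' hb⟩
  choose c d hcmem hdmem hcdeq hdO using hdec2
  -- prop III instances
  have hmem1a : ∀ i, a i ∈ Ai i ^ 1 := fun i => by rw [pow_one]; exact hamem i
  have hmem1b : ∀ i, b i ∈ Ai i ^ 1 := fun i => by rw [pow_one]; exact hbmem i
  have hmem1c : ∀ i, c i ∈ Ai i ^ 1 := fun i => by rw [pow_one]; exact hcmem i
  have hmem1d : ∀ i, d i ∈ Ai i ^ 1 := fun i => by rw [pow_one]; exact hdmem i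
  have hh2 : ∀ i, h i ∈ Ai i ^ 2 := fun i => by
    rw [sq, habeq i]; exact Set.mul_mem_mul (hamem i) (hbmem i)
  have hε1 := hga.prop_III 1 a b hmem1a hmem1b
  have hε2 := hga.prop_III 1 c d hmem1c hmem1d
  have hε3 := hga.prop_III 2 h h hh2 hh2
  have hII := hga.prop_II W hWopen hAW
  -- extraction
  have hfreq : ∃ᶠ i in atTop, bad i ∧ (φ i '' Ai i ⊆ W) ∧ t 0 ≤ i :=
    hcon'.and_eventually (hII.and (eventually_ge_atTop (t 0)))
  obtain ⟨ψ, hψmono, hψ⟩ := Filter.extraction_of_frequently_atTop hfreq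
  have hFmem : ∀ k, (φ (ψ k) (a (ψ k)), φ (ψ k) (c (ψ k))) ∈
      (closure W) ×ˢ (closure W) := by
    intro k
    obtain ⟨hbk, hsub, ht0⟩ := hψ k
    exact ⟨subset_closure (hsub ⟨a (ψ k), hamem _, rfl⟩),
      subset_closure (hsub ⟨c (ψ k), hcmem _, rfl⟩)⟩
  obtain ⟨⟨α, γ⟩, hαγmem, σ, hσmono, hσtend⟩ := (hclW.prod hclW).tendsto_subseq hFmem
  set θ : ℕ → ℕ := fun k => ψ (σ k) with hθdef
  have hθmono : StrictMono θ := hψmono.comp hσmono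
  have hθtend : Tendsto θ atTop atTop := hθmono.tendsto_atTop
  have hθbad : ∀ k, bad (θ k) := fun k => (hψ (σ k)).1
  have hθt0 : ∀ k, t 0 ≤ θ k := fun k => (hψ (σ k)).2.2
  have hatend : Tendsto (fun k => φ (θ k) (a (θ k))) atTop (𝓝 α) := by
    have := (continuous_fst.tendsto (α, γ)).comp hσtend
    exact this
  have hctend : Tendsto (fun k => φ (θ k) (c (θ k))) atTop (𝓝 γ) := by
    have := (continuous_snd.tendsto (α, γ)).comp hσtend
    exact this
  -- b, d tend to 1
  have hbtend : Tendsto (fun k => φ (θ k) (b (θ k))) atTop (𝓝 (1:G)) := by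
    rw [hu.toHasBasis.tendsto_right_iff]
    intro n _
    filter_upwards [(hNtend.comp hθtend).eventually_ge_atTop n] with k hk
    exact hu.antitone hk (hOu _ (hbO (θ k) (hθt0 k) (hθbad k)))
  have hdtend : Tendsto (fun k => φ (θ k) (d (θ k))) atTop (𝓝 (1:G)) := by
    rw [hu.toHasBasis.tendsto_right_iff]
    intro n _
    filter_upwards [(hNtend.comp hθtend).eventually_ge_atTop n] with k hk
    exact hu.antitone hk (hOu _ (hdO (θ k) (hθt0 k) (hθbad k)))
  -- limit of φ(h)
  have hhtend : Tendsto (fun k => φ (θ k) (h (θ k))) atTop (𝓝 α) := by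
    have hlim := (hatend.mul hbtend).mul ((hε1.comp hθtend).inv)
    simp only [mul_one, inv_one] at hlim
    refine hlim.congr fun k => ?_
    rw [habeq (θ k)]
    simp only [Function.comp_apply]
    group
  -- limit of φ(h^2) two ways
  have hh2tend1 : Tendsto (fun k => φ (θ k) ((h (θ k)) ^ 2)) atTop (𝓝 γ) := by
    have hlim := (hctend.mul hdtend).mul ((hε2.comp hθtend).inv)
    simp only [mul_one, inv_one] at hlim
    refine hlim.congr fun k => ?_
    rw [hcdeq (θ k)]
    simp only [Function.comp_apply]
    group
  have hh2tend2 : Tendsto (fun k => φ (θ k) ((h (θ k)) ^ 2)) atTop (𝓝 (α ^ 2)) := by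
    have hlim := (hhtend.mul hhtend).mul ((hε3.comp hθtend).inv)
    have hlim2 : Tendsto (fun k => φ (θ k) (h (θ k)) * φ (θ k) (h (θ k)) *
        ((φ (θ k) (h (θ k) * h (θ k)))⁻¹ * φ (θ k) (h (θ k)) * φ (θ k) (h (θ k)))⁻¹)
        atTop (𝓝 (α ^ 2)) := by
      simpa [sq] using hlim
    refine hlim2.congr fun k => ?_
    rw [sq]
    group
  have hγα : γ = α ^ 2 := tendsto_nhds_unique hh2tend1 hh2tend2
  -- α ∈ closure A
  have hαcl : α ∈ closure A := by
    by_contra hns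
    obtain ⟨U', V', hU'o, hV'o, hsubU, hsubV, hdisj⟩ :=
      SeparatedNhds.of_isCompact_isCompact hga.compact_closure_A isCompact_singleton
        (Set.disjoint_singleton_right.mpr hns)
    have hev := hga.prop_II U' hU'o hsubU
    have h1 : ∀ᶠ k in atTop, φ (θ k) (a (θ k)) ∈ U' := by
      filter_upwards [hθtend.eventually hev] with k hk
      exact hk ⟨a (θ k), hamem _, rfl⟩
    have h2 : ∀ᶠ k in atTop, φ (θ k) (a (θ k)) ∈ V' :=
      hatend.eventually (hV'o.mem_nhds (hsubV rfl))
    obtain ⟨k, hk1, hk2⟩ := (h1.and h2).exists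
    exact Set.disjoint_left.mp hdisj hk1 hk2
  have hγcl : γ ∈ closure A := by
    by_contra hns
    obtain ⟨U', V', hU'o, hV'o, hsubU, hsubV, hdisj⟩ :=
      SeparatedNhds.of_isCompact_isCompact hga.compact_closure_A isCompact_singleton
        (Set.disjoint_singleton_right.mpr hns)
    have hev := hga.prop_II U' hU'o hsubU
    have h1 : ∀ᶠ k in atTop, φ (θ k) (c (θ k)) ∈ U' := by
      filter_upwards [hθtend.eventually hev] with k hk
      exact hk ⟨c (θ k), hcmem _, rfl⟩
    have h2 : ∀ᶠ k in atTop, φ (θ k) (c (θ k)) ∈ V' :=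
      hctend.eventually (hV'o.mem_nhds (hsubV rfl))
    obtain ⟨k, hk1, hk2⟩ := (h1.and h2).exists
    exact Set.disjoint_left.mp hdisj hk1 hk2
  -- α ∉ A
  have hαA : α ∉ A := by
    intro hαA
    obtain ⟨K, hKcomp, hαint, hKA⟩ := exists_compact_subset hga.open_A hαA
    obtain ⟨i₀, hIV⟩ := hga.prop_IV 2 K hKA hKcomp
    have h1 : ∀ᶠ k in atTop, φ (θ k) (h (θ k)) ∈ K :=
      hhtend.eventually_mem (mem_of_superset (isOpen_interior.mem_nhds hαint) interior_subset)
    have h2 : ∀ᶠ k in atTop, i₀ ≤ θ k := hθtend.eventually_ge_atTop i₀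
    obtain ⟨k, hk1, hk2⟩ := (h1.and h2).exists
    exact (hbadspec (θ k) (hθbad k)).2.2 (hIV (θ k) hk2 _ (hh2 (θ k)) hk1)
  -- α ∈ (closure A)^3
  have hα3 : α ∈ (closure A) ^ 3 := by
    have h1A : (1:G) ∈ closure A := subset_closure hga.one_mem_A
    have : (1:G) * 1 * α ∈ closure A * closure A * closure A :=
      Set.mul_mem_mul (Set.mul_mem_mul h1A h1A) hαcl
    simpa [pow_succ, pow_zero, one_mul] using this
  exact hA α hα3 hαA (hγα ▸ hγcl)


/-- If `A` satisfies: `h ∈ (closure A)³ \ A` implies `h² ∉ closure A`,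
then for all large `i`, for every convergent sequence `g_j → g` in `Gi i` one has
`‖g‖_{Ai i} ≤ 2 liminf_j ‖g_j‖_{Ai i}`. -/
theorem stmt11 {G : Type*} [Group G] [TopologicalSpace G] [IsTopologicalGroup G]
    [T2Space G] [LocallyCompactSpace G] [FirstCountableTopology G]
    {Gi : ℕ → Type*} [∀ i, Group (Gi i)] [∀ i, TopologicalSpace (Gi i)]
    [∀ i, IsTopologicalGroup (Gi i)] [∀ i, T2Space (Gi i)] [∀ i, LocallyCompactSpace (Gi i)]
    (φ : ∀ i, Gi i → G) (Ai : ∀ i, Set (Gi i)) (A : Set G)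
    (hga : IsGoodApprox φ Ai A)
    (hA : ∀ h : G, h ∈ (closure A) ^ 3 → h ∉ A → h ^ 2 ∉ closure A) :
    ∀ᶠ i in atTop, ∀ (gseq : ℕ → Gi i) (g : Gi i),
      Tendsto gseq atTop (𝓝 g) →
      escapeNorm (Ai i) g ≤ 2 * liminf (fun j => escapeNorm (Ai i) (gseq j)) atTop := by
  filter_upwards [key_lemma φ Ai A hga hA] with i hkey
  intro gseq g hconv
  exact escape_of_key (hga.one_mem_Ai i) hkey gseq g hconv
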